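/- arXiv:2202.13478 — 6 statements merged into one kernel-verified Lean document; each statement's English description precedes it below -/
import Mathlib

section
/- In the Golomb topology on ℤ \ {0}, any two distinct nonzero integers can be separated by disjoint open sets; i.e., (ℤ \ {0}, Golomb topology) is Hausdorff. -/
/-- The Golomb topology on ℤ, generated by the cosets a + nℤ with gcd(a, n) = 1, n ≥ 1
(together with ℤ itself). -/
def golomb : TopologicalSpace ℤ :=
  .generateFrom ({S | ∃ (a : ℤ) (n : ℕ), 0 < n ∧ Int.gcd a n = 1 ∧
    S = {x : ℤ | ∃ k : ℤ, x = a + n * k}} ∪ {Set.univ})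

lemma not_dvd_of_abs_lt {p : ℕ} {z : ℤ} (hz : z ≠ 0) (h : |z| < (p : ℤ)) : ¬ (p : ℤ) ∣ z := by
  intro hd
  have : (p : ℤ) ≤ |z| := Int.le_of_dvd (abs_pos.mpr hz) ((dvd_abs _ _).mpr hd)
  omega

lemma gcd_eq_one_of_prime {p : ℕ} {z : ℤ} (hp : p.Prime) (h : ¬ (p : ℤ) ∣ z) :
    Int.gcd z p = 1 := by
  have : Nat.Coprime p z.natAbs :=
    (Nat.Prime.coprime_iff_not_dvd hp).mpr (fun hd => h (Int.natCast_dvd.mpr hd))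
  simpa [Int.gcd, Nat.coprime_comm] using this.symm

/-- The Golomb topology restricted to ℤ \ {0} is Hausdorff: any two distinct nonzero
integers can be separated by Golomb-open sets which are disjoint on ℤ \ {0}. -/
theorem golomb_hausdorff_on_nonzero (a b : ℤ) (ha : a ≠ 0) (hb : b ≠ 0) (hab : a ≠ b) :
    ∃ U V : Set ℤ, @IsOpen ℤ golomb U ∧ @IsOpen ℤ golomb V ∧ a ∈ U ∧ b ∈ V ∧
      U ∩ V ∩ {x : ℤ | x ≠ 0} = ∅ := by
  obtain ⟨p, hple, hp⟩ := Nat.exists_infinite_primes ((|a| + |b| + |a - b|).toNat + 1)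
  have hpbig : |a| + |b| + |a - b| < (p : ℤ) := by
    have := Int.toNat_of_nonneg (by positivity : (0:ℤ) ≤ |a| + |b| + |a - b|)
    omega
  have hpa : ¬ (p : ℤ) ∣ a := not_dvd_of_abs_lt ha (by have := abs_nonneg b; have := abs_nonneg (a - b); omega)
  have hpb : ¬ (p : ℤ) ∣ b := not_dvd_of_abs_lt hb (by have := abs_nonneg a; have := abs_nonneg (a - b); omega)
  have hpab : ¬ (p : ℤ) ∣ (a - b) := not_dvd_of_abs_lt (sub_ne_zero.mpr hab)
    (by have := abs_nonneg a; have := abs_nonneg b; omega)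
  refine ⟨{x : ℤ | ∃ k : ℤ, x = a + p * k}, {x : ℤ | ∃ k : ℤ, x = b + p * k}, ?_, ?_, ⟨0, by ring⟩,
    ⟨0, by ring⟩, ?_⟩
  · exact TopologicalSpace.GenerateOpen.basic _ (Or.inl ⟨a, p, hp.pos, gcd_eq_one_of_prime hp hpa, rfl⟩)
  · exact TopologicalSpace.GenerateOpen.basic _ (Or.inl ⟨b, p, hp.pos, gcd_eq_one_of_prime hp hpb, rfl⟩)
  · ext x
    simp only [Set.mem_inter_iff, Set.mem_setOf_eq, Set.mem_empty_iff_false, iff_false, not_and]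
    rintro ⟨⟨k, rfl⟩, ⟨l, hl⟩⟩ _
    exact hpab ⟨l - k, by linarith⟩
end

section
/- In the Golomb topology on ℤ, the only open set containing 0 is ℤ itself; consequently (ℤ, Golomb topology) is connected and compact. -/
lemma golomb_zero_mem {U : Set ℤ} (h : @IsOpen ℤ golomb U) (h0 : (0 : ℤ) ∈ U) :
    U = Set.univ := by
  induction h with
  | basic s hs =>
    rcases hs with ⟨a, n, hn, hg, rfl⟩ | hs
    · rcases h0 with ⟨k, hk⟩
      have ha : (n : ℤ) ∣ a := ⟨-k, by linarith⟩
      have hn1 : n = 1 := by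
        have h1 : (n : ℤ) ∣ (Int.gcd a n : ℤ) := Int.dvd_coe_gcd ha dvd_rfl
        rw [hg] at h1
        have := Int.le_of_dvd one_pos h1
        omega
      ext x
      simp only [Set.mem_univ, iff_true, Set.mem_setOf_eq]
      exact ⟨x - a, by push_cast [hn1]; ring⟩
    · simpa using hs
  | univ => rfl
  | inter s t _ _ ihs iht =>
    rw [ihs h0.1, iht h0.2, Set.univ_inter]
  | sUnion S _ ih =>
    rcases h0 with ⟨s, hs, h0s⟩
    exact Set.eq_univ_of_univ_subset ((ih s hs h0s) ▸ Set.subset_sUnion_of_mem hs)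

/-- In the Golomb topology the only open set containing 0 is ℤ itself; consequently
(ℤ, golomb) is connected and compact. -/
theorem golomb_zero_indiscrete_connected_compact :
    (∀ U : Set ℤ, @IsOpen ℤ golomb U → (0 : ℤ) ∈ U → U = Set.univ) ∧
    @ConnectedSpace ℤ golomb ∧ @CompactSpace ℤ golomb := by
  letI := golomb
  refine ⟨fun U hU h0 => golomb_zero_mem hU h0, ?_, ?_⟩
  · refine { toPreconnectedSpace := ⟨?_⟩, toNonempty := ⟨0⟩ }
    intro U V hU hV hcov hUn hVn
    rcases hcov (Set.mem_univ (0 : ℤ)) with h | h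
    · have heq := golomb_zero_mem hU h
      rcases hVn with ⟨v, _, hv⟩
      exact ⟨v, Set.mem_univ v, heq ▸ Set.mem_univ v, hv⟩
    · have heq := golomb_zero_mem hV h
      rcases hUn with ⟨u, _, hu⟩
      exact ⟨u, Set.mem_univ u, hu, heq ▸ Set.mem_univ u⟩
  · refine ⟨?_⟩
    rw [isCompact_iff_finite_subcover]
    intro ι Us hUs hcov
    rcases Set.mem_iUnion.mp (hcov (Set.mem_univ 0)) with ⟨i, hi⟩
    refine ⟨{i}, ?_⟩
    intro x _
    refine Set.mem_biUnion (Finset.mem_singleton_self i) ?_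
    rw [golomb_zero_mem (hUs i) hi]
    trivial
end

section
/- The space ℤ \ {1, -1} with the topology of zero-divisors is totally separated: for any two distinct elements a, b there exist disjoint open sets U, V with a ∈ U, b ∈ V, and U ∪ V = ℤ \ {1, -1}. -/
/-- The topology of zero-divisors on ℤ: subbase given by the cosets a + nℤ (n ≥ 1) such
that the residue of a is a zero-divisor in ℤ/nℤ, i.e. gcd(a, n) > 1. -/
def tzd : TopologicalSpace ℤ :=
  .generateFrom {S | ∃ (a : ℤ) (n : ℕ), 0 < n ∧ 1 < Int.gcd a n ∧
    S = {x : ℤ | ∃ k : ℤ, x = a + n * k}}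

/-- ℤ \ {1, -1} with the topology of zero-divisors is totally separated: any two distinct
points are separated by open sets, disjoint on ℤ \ {1, -1}, which cover ℤ \ {1, -1}. -/
theorem tzd_totally_separated (a b : ℤ) (ha : a ≠ 1 ∧ a ≠ -1) (hb : b ≠ 1 ∧ b ≠ -1)
    (hab : a ≠ b) :
    ∃ U V : Set ℤ, @IsOpen ℤ tzd U ∧ @IsOpen ℤ tzd V ∧ a ∈ U ∧ b ∈ V ∧
      U ∩ V ∩ {x : ℤ | x ≠ 1 ∧ x ≠ -1} = ∅ ∧
      {x : ℤ | x ≠ 1 ∧ x ≠ -1} ⊆ U ∪ V := by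
  classical
  set sub : Set (Set ℤ) := {S | ∃ (a : ℤ) (n : ℕ), 0 < n ∧ 1 < Int.gcd a n ∧
    S = {x : ℤ | ∃ k : ℤ, x = a + n * k}} with hsub
  have hopen : ∀ S ∈ sub, @IsOpen ℤ tzd S := fun S hS =>
    TopologicalSpace.GenerateOpen.basic _ hS
  -- the prime p dividing a
  have hane : a.natAbs ≠ 1 := by
    intro h
    rcases Int.natAbs_eq_iff.mp h with h1 | h1
    · exact ha.1 (by simpa using h1)
    · exact ha.2 (by simpa using h1)
  set p := a.natAbs.minFac with hpdef
  have hp : p.Prime := Nat.minFac_prime hane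
  have hpa : (p : ℤ) ∣ a :=
    (Int.natCast_dvd_natCast.mpr (Nat.minFac_dvd _)).trans (Int.natAbs_dvd.mpr dvd_rfl)
  set k := (a - b).natAbs.factorization p + 1 with hkdef
  have habne : (a - b).natAbs ≠ 0 := by
    simp [Int.natAbs_eq_zero, sub_eq_zero, hab]
  have hndvd : ¬ ((p : ℤ) ^ k ∣ (a - b)) := by
    intro h
    have h2 := Int.natAbs_dvd_natAbs.mpr h
    simp only [Int.natAbs_pow, Int.natAbs_natCast] at h2
    exact Nat.pow_succ_factorization_not_dvd habne hp (by simpa using h2)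
  set N : ℕ := p ^ k with hNdef
  have hNpos : 0 < N := Nat.pow_pos (n := k) hp.pos
  have hpN : p ∣ N := dvd_pow_self p (Nat.succ_ne_zero _)
  set U : Set ℤ := {x : ℤ | ∃ m : ℤ, x = a + (N : ℤ) * m} with hUdef
  have hUsub : U ∈ sub := by
    refine ⟨a, N, hNpos, ?_, rfl⟩
    have h1 : p ∣ Int.gcd a N := Nat.dvd_gcd (Int.natCast_dvd_natCast.mp (by
      simpa using Int.dvd_natAbs.mpr hpa)) hpN
    exact lt_of_lt_of_le hp.one_lt (Nat.le_of_dvd (Nat.gcd_pos_of_pos_right _ hNpos) h1)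
  -- membership in U is a congruence condition
  have hUcong : ∀ x : ℤ, x ∈ U ↔ (N : ℤ) ∣ (x - a) := by
    intro x
    constructor
    · rintro ⟨m, rfl⟩; exact ⟨m, by ring⟩
    · rintro ⟨m, hm⟩; exact ⟨m, by linarith⟩
  set V : Set ℤ := ⋃₀ {T | T ∈ sub ∧ T ∩ U = ∅} with hVdef
  have hVopen : @IsOpen ℤ tzd V := by
    apply @isOpen_sUnion ℤ tzd
    intro T hT; exact hopen T hT.1
  have hUV : U ∩ V = ∅ := by
    ext y
    simp only [Set.mem_inter_iff, Set.mem_sUnion, Set.mem_empty_iff_false, iff_false]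
    rintro ⟨hyU, T, ⟨hTsub, hTU⟩, hyT⟩
    have : y ∈ T ∩ U := ⟨hyT, hyU⟩
    rw [hTU] at this; exact this
  -- key: every x ≠ ±1 not in U lies in V
  have hkey : ∀ x : ℤ, x ≠ 1 → x ≠ -1 → x ∉ U → x ∈ V := by
    intro x hx1 hx2 hxU
    by_cases hpx : (p : ℤ) ∣ x
    · -- use the coset x + N ℤ
      refine ⟨{y : ℤ | ∃ m : ℤ, y = x + (N : ℤ) * m}, ⟨⟨x, N, hNpos, ?_, rfl⟩, ?_⟩, ⟨0, by ring⟩⟩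
      · have h1 : p ∣ Int.gcd x N := Nat.dvd_gcd (Int.natCast_dvd_natCast.mp (by
          simpa using Int.dvd_natAbs.mpr hpx)) hpN
        exact lt_of_lt_of_le hp.one_lt (Nat.le_of_dvd (Nat.gcd_pos_of_pos_right _ hNpos) h1)
      · ext y
        simp only [Set.mem_inter_iff, Set.mem_setOf_eq, Set.mem_empty_iff_false, iff_false]
        rintro ⟨⟨m1, h1⟩, m2, h2⟩
        exact hxU ((hUcong x).mpr ⟨m2 - m1, by rw [mul_sub]; linarith⟩)
    · -- x not divisible by p; pick prime q ∣ x, q ≠ p, use coset x + q p ℤ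
      have hx0 : x ≠ 0 := by rintro rfl; exact hpx (dvd_zero _)
      have hxne : x.natAbs ≠ 1 := by
        intro h
        rcases Int.natAbs_eq_iff.mp h with h1 | h1
        · exact hx1 (by simpa using h1)
        · exact hx2 (by simpa using h1)
      set q := x.natAbs.minFac with hqdef
      have hq : q.Prime := Nat.minFac_prime hxne
      have hqx : (q : ℤ) ∣ x :=
        (Int.natCast_dvd_natCast.mpr (Nat.minFac_dvd _)).trans (Int.natAbs_dvd.mpr dvd_rfl)
      have hqp : 0 < q * p := Nat.mul_pos hq.pos hp.pos
      refine ⟨{y : ℤ | ∃ m : ℤ, y = x + ((q * p : ℕ) : ℤ) * m},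
        ⟨⟨x, q * p, hqp, ?_, rfl⟩, ?_⟩, ⟨0, by ring⟩⟩
      · have h1 : q ∣ Int.gcd x (q * p) := Nat.dvd_gcd (Int.natCast_dvd_natCast.mp (by
          simpa using Int.dvd_natAbs.mpr hqx)) ⟨p, rfl⟩
        exact lt_of_lt_of_le hq.one_lt (Nat.le_of_dvd (Nat.gcd_pos_of_pos_right _ hqp) h1)
      · ext y
        simp only [Set.mem_inter_iff, Set.mem_setOf_eq, Set.mem_empty_iff_false, iff_false]
        rintro ⟨⟨m1, h1⟩, m2, h2⟩
        -- p ∣ y since y ∈ U and p ∣ a, p ∣ N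
        have hpy : (p : ℤ) ∣ y := by
          rw [h2]
          exact dvd_add hpa ((Int.natCast_dvd_natCast.mpr hpN).mul_right m2)
        -- but p ∣ y - x from h1, so p ∣ x, contradiction
        apply hpx
        have hpd : (p : ℤ) ∣ ((q * p : ℕ) : ℤ) * m1 :=
          (Int.natCast_dvd_natCast.mpr ⟨q, mul_comm q p⟩).mul_right m1
        have hxeq : x = y - ((q * p : ℕ) : ℤ) * m1 := by linarith
        rw [hxeq]
        exact dvd_sub hpy hpd
  have hbU : b ∉ U := by
    intro hbU
    rcases (hUcong b).mp hbU with ⟨m, hm⟩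
    apply hndvd
    refine ⟨-m, ?_⟩
    have : (N : ℤ) = (p : ℤ) ^ k := by push_cast [hNdef]; ring
    rw [← this]; linarith
  refine ⟨U, V, hopen U hUsub, hVopen, ⟨0, by ring⟩, hkey b hb.1 hb.2 hbU, ?_, ?_⟩
  · rw [hUV]; simp
  · intro x hx
    by_cases hxU : x ∈ U
    · exact Or.inl hxU
    · exact Or.inr (hkey x hx.1 hx.2 hxU)
end

section
/- A function f : ℤ \ {0} → ℤ \ {0} is continuous with respect to the Rizza (division) topology if and only if a ∣ b implies f(a) ∣ f(b) for all nonzero integers a, b. -/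
/-- The Rizza (division) topology on ℤ: open sets are the unions of the ideals nℤ, n ≥ 1. -/
def rizza : TopologicalSpace ℤ :=
  .generateFrom {S | ∃ n : ℕ, 0 < n ∧ S = {x : ℤ | (n : ℤ) ∣ x}}

/-- The Rizza topology restricted to ℤ \ {0}. -/
def rizzaNZ : TopologicalSpace {x : ℤ // x ≠ 0} :=
  rizza.induced Subtype.val

lemma rizza_up {U : Set ℤ}
    (h : TopologicalSpace.GenerateOpen {S | ∃ n : ℕ, 0 < n ∧ S = {x : ℤ | (n : ℤ) ∣ x}} U) :
    ∀ x ∈ U, ∀ y : ℤ, x ∣ y → y ∈ U := by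
  induction h with
  | basic S hS =>
      obtain ⟨n, hn, rfl⟩ := hS
      intro x hx y hxy
      exact hx.trans hxy
  | univ => intro x _ y _; trivial
  | inter S T _ _ ihS ihT =>
      intro x hx y hxy; exact ⟨ihS x hx.1 y hxy, ihT x hx.2 y hxy⟩
  | sUnion 𝒮 _ ih =>
      rintro x ⟨S, hS, hx⟩ y hxy
      exact ⟨S, hS, ih S hS x hx y hxy⟩

lemma rizzaNZ_open_iff (V : Set {x : ℤ // x ≠ 0}) :
    @IsOpen _ rizzaNZ V ↔ ∀ a ∈ V, ∀ b : {x : ℤ // x ≠ 0}, a.1 ∣ b.1 → b ∈ V := by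
  letI : TopologicalSpace ℤ := rizza
  constructor
  · rintro ⟨U, hU, rfl⟩ a ha b hab
    exact rizza_up hU a.1 ha b.1 hab
  · intro h
    refine ⟨⋃ a ∈ V, {x : ℤ | a.1 ∣ x}, ?_, ?_⟩
    · refine isOpen_iUnion fun a => isOpen_iUnion fun ha => ?_
      exact TopologicalSpace.GenerateOpen.basic _
        ⟨a.1.natAbs, Int.natAbs_pos.mpr a.2, by
          ext x; simp [Int.natAbs_dvd]⟩
    · ext x
      simp only [Set.preimage_iUnion, Set.mem_iUnion, Set.mem_preimage, Set.mem_setOf_eq]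
      constructor
      · rintro ⟨a, ha, hax⟩
        exact h a ha x hax
      · intro hx
        exact ⟨x, hx, dvd_refl _⟩

/-- A function f : ℤ \ {0} → ℤ \ {0} is continuous for the Rizza topology iff it is
divisibility-preserving. -/
theorem rizza_continuous_iff (f : {x : ℤ // x ≠ 0} → {x : ℤ // x ≠ 0}) :
    @Continuous _ _ rizzaNZ rizzaNZ f ↔ ∀ a b : {x : ℤ // x ≠ 0}, a.1 ∣ b.1 → (f a).1 ∣ (f b).1 := by
  rw [@continuous_def _ _ rizzaNZ rizzaNZ]
  constructor
  · intro hf a b hab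
    have hV : @IsOpen _ rizzaNZ {c : {x : ℤ // x ≠ 0} | (f a).1 ∣ c.1} := by
      rw [rizzaNZ_open_iff]
      intro c hc d hcd
      exact dvd_trans hc hcd
    have := hf _ hV
    rw [rizzaNZ_open_iff] at this
    exact this a (dvd_refl _) b hab
  · intro h V hV
    rw [rizzaNZ_open_iff] at hV ⊢
    intro a ha b hab
    exact hV (f a) ha (f b) (h a b hab)
end

section
/- In the Rizza topology on ℤ, the closure of a nonempty set X with 0 ∉ X consists exactly of those nonzero a ∈ ℤ dividing some element of X, together with membership of 0 iff 0 ∈ X̄ trivially; in particular 1 and -1 lie in every nonempty closed set, and hence (ℤ, T_R) is compact and connected. -/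
lemma rizza_mem_open {U : Set ℤ} (h : @IsOpen ℤ rizza U) :
    ∀ a ∈ U, ∃ n : ℕ, 0 < n ∧ (n : ℤ) ∣ a ∧ {x : ℤ | (n : ℤ) ∣ x} ⊆ U := by
  have h' : TopologicalSpace.GenerateOpen
      {S | ∃ n : ℕ, 0 < n ∧ S = {x : ℤ | (n : ℤ) ∣ x}} U := h
  induction h' with
  | basic S hS =>
      obtain ⟨n, hn, rfl⟩ := hS
      intro a ha
      exact ⟨n, hn, ha, fun x hx => hx⟩
  | univ =>
      intro a _
      exact ⟨1, one_pos, one_dvd _, fun x _ => trivial⟩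
  | inter U V hU hV ihU ihV =>
      intro a ha
      obtain ⟨n, hn, hna, hnU⟩ := ihU hU a ha.1
      obtain ⟨m, hm, hma, hmV⟩ := ihV hV a ha.2
      refine ⟨Nat.lcm n m, Nat.pos_of_ne_zero (Nat.lcm_ne_zero hn.ne' hm.ne'), ?_, ?_⟩
      · have := Int.lcm_dvd (Int.dvd_natAbs.mpr hna) (Int.dvd_natAbs.mpr hma)
        simpa [Int.lcm, Int.natCast_dvd] using this
      · intro x hx
        have hn' : (n : ℤ) ∣ x := dvd_trans (Int.natCast_dvd_natCast.mpr (Nat.dvd_lcm_left n m)) hx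
        have hm' : (m : ℤ) ∣ x := dvd_trans (Int.natCast_dvd_natCast.mpr (Nat.dvd_lcm_right n m)) hx
        exact ⟨hnU hn', hmV hm'⟩
  | sUnion S hS ih =>
      intro a ha
      obtain ⟨U, hU, haU⟩ := ha
      obtain ⟨n, hn, hna, hnU⟩ := ih U hU (hS U hU) a haU
      exact ⟨n, hn, hna, hnU.trans (Set.subset_sUnion_of_mem hU)⟩

/-- In the Rizza topology, for X nonempty with 0 ∉ X, a nonzero integer lies in the closure
of X iff it divides some element of X; every nonempty closed set contains 1 and -1; hence
(ℤ, rizza) is compact and connected. -/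
theorem rizza_closure_compact_connected :
    (∀ X : Set ℤ, X.Nonempty → (0 : ℤ) ∉ X → ∀ a : ℤ, a ≠ 0 →
      (a ∈ @closure ℤ rizza X ↔ ∃ b ∈ X, a ∣ b)) ∧
    (∀ C : Set ℤ, @IsClosed ℤ rizza C → C.Nonempty → (1 : ℤ) ∈ C ∧ (-1 : ℤ) ∈ C) ∧
    @CompactSpace ℤ rizza ∧ @ConnectedSpace ℤ rizza := by
  letI : TopologicalSpace ℤ := rizza
  -- helper: every open set containing ±1 is everything
  have hone : ∀ (U : Set ℤ), IsOpen U → ∀ a : ℤ, a = 1 ∨ a = -1 → a ∈ U → U = Set.univ := by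
    intro U hU a ha haU
    obtain ⟨n, hn, hna, hsub⟩ := rizza_mem_open hU a haU
    have hn1 : n = 1 := by
      rcases ha with rfl | rfl
      · exact Nat.dvd_one.mp (Int.natCast_dvd_natCast.mp (by exact_mod_cast hna))
      · have : (n : ℤ) ∣ 1 := (dvd_neg).mp hna
        exact Nat.dvd_one.mp (Int.natCast_dvd_natCast.mp (by exact_mod_cast this))
    apply Set.eq_univ_of_univ_subset
    intro x _
    exact hsub (by simp [hn1])
  -- helper: every nonempty open set contains 0
  have hzero : ∀ (U : Set ℤ), IsOpen U → U.Nonempty → (0 : ℤ) ∈ U := by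
    intro U hU ⟨a, ha⟩
    obtain ⟨n, hn, _, hsub⟩ := rizza_mem_open hU a ha
    exact hsub (dvd_zero _)
  -- closure membership for ±1
  have hclos1 : ∀ (X : Set ℤ), X.Nonempty → ∀ a : ℤ, a = 1 ∨ a = -1 → a ∈ closure X := by
    intro X hX a ha
    rw [mem_closure_iff]
    intro o ho hao
    rw [hone o ho a ha hao]
    simpa using hX
  refine ⟨?_, ?_, ?_, ?_⟩
  · intro X _ _ a ha
    constructor
    · intro h
      rw [mem_closure_iff] at h
      have hopen : IsOpen {x : ℤ | (a.natAbs : ℤ) ∣ x} :=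
        TopologicalSpace.isOpen_generateFrom_of_mem ⟨a.natAbs, Int.natAbs_pos.mpr ha, rfl⟩
      obtain ⟨b, hb, hbX⟩ := h _ hopen (Int.natAbs_dvd.mpr dvd_rfl)
      exact ⟨b, hbX, Int.natAbs_dvd.mp hb⟩
    · rintro ⟨b, hbX, hab⟩
      rw [mem_closure_iff]
      intro o ho hao
      obtain ⟨n, hn, hna, hsub⟩ := rizza_mem_open ho a hao
      exact ⟨b, hsub (hna.trans hab), hbX⟩
  · intro C hC hCne
    have h1 := hclos1 C hCne 1 (Or.inl rfl)
    have h2 := hclos1 C hCne (-1) (Or.inr rfl)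
    rw [hC.closure_eq] at h1 h2
    exact ⟨h1, h2⟩
  · constructor
    apply isCompact_of_finite_subcover
    intro ι U hU hcov
    obtain ⟨i, hi⟩ := Set.mem_iUnion.mp (hcov (Set.mem_univ (1 : ℤ)))
    refine ⟨{i}, ?_⟩
    intro x _
    have := hone (U i) (hU i) 1 (Or.inl rfl) hi
    simp [this]
  · have hpre : PreconnectedSpace ℤ := by
      constructor
      intro u v hu hv _ ⟨x, _, hxu⟩ ⟨y, _, hyv⟩
      exact ⟨0, Set.mem_univ _, hzero u hu ⟨x, hxu⟩, hzero v hv ⟨y, hyv⟩⟩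
    exact @ConnectedSpace.mk ℤ _ hpre ⟨0⟩
end

section
/- The set of primes is infinite if and only if the subspace ℤ \ {1, -1} of (ℤ, T_R) is not compact. -/
/-- The set of primes is infinite iff ℤ \ {1, -1} is not compact in the Rizza topology. -/
theorem primes_infinite_iff_rizza_noncompact :
    {p : ℕ | p.Prime}.Infinite ↔ ¬ @IsCompact ℤ rizza {x : ℤ | x ≠ 1 ∧ x ≠ -1} := by
  have hinf : {p : ℕ | p.Prime}.Infinite := Nat.infinite_setOf_prime
  constructor
  · intro _ hc
    set U : ℕ → Set ℤ := fun p => {x : ℤ | (p : ℤ) ∣ x} with hU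
    have hopen : ∀ p : ℕ, p.Prime → @IsOpen ℤ rizza (U p) := by
      intro p hp
      exact TopologicalSpace.GenerateOpen.basic _ ⟨p, hp.pos, rfl⟩
    have hcov : {x : ℤ | x ≠ 1 ∧ x ≠ -1} ⊆ ⋃ p ∈ {p : ℕ | p.Prime}, U p := by
      intro x hx
      have hna : x.natAbs ≠ 1 := by
        intro h
        rcases Int.natAbs_eq_iff.mp h with h1 | h1
        · exact hx.1 (by simpa using h1)
        · exact hx.2 (by simpa using h1)
      obtain ⟨p, hp, hpd⟩ := Int.exists_prime_and_dvd hna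
      exact Set.mem_biUnion (Int.prime_iff_natAbs_prime.mp hp)
        (Int.natAbs_dvd.mpr hpd)
    obtain ⟨t, ht⟩ := @IsCompact.elim_finite_subcover_image ℤ ℕ rizza _ _ _ hc hopen hcov
    obtain ⟨hts, htfin, hsub⟩ := ht
    obtain ⟨q, hq, hqt⟩ := hinf.exists_notMem_finset htfin.toFinset
    have hqmem : (q : ℤ) ∈ {x : ℤ | x ≠ 1 ∧ x ≠ -1} := by
      constructor
      · intro h
        have := hq.one_lt
        omega
      · intro h
        omega
    obtain ⟨p, hpt, hpd⟩ := Set.mem_iUnion₂.mp (hsub hqmem)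
    have hp : p.Prime := hts hpt
    have : p ∣ q := Int.natCast_dvd_natCast.mp hpd
    have : p = q := (Nat.prime_dvd_prime_iff_eq hp hq).mp this
    exact hqt (htfin.mem_toFinset.mpr (this ▸ hpt))
  · intro _
    exact hinf
end
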